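/- Define D(ξ) := 1 − 4·m(ξ)·(1+m(ξ))², and for ξ with D(ξ) ≥ 0 define λ₊(ξ) := (−1 + √(D(ξ)))/(2(1+m(ξ))) and λ₋(ξ) := (−1 − √(D(ξ)))/(2(1+m(ξ))). Then there exist positive constants c₁, …, c₈ (independent of ξ) such that for all ξ ∈ ℝⁿ with D(ξ) ≥ 0: (i) c₁·m(ξ) ≤ −λ₊(ξ) ≤ c₂·m(ξ); (ii) c₃ ≤ −λ₋(ξ) ≤ c₄; (iii) c₅ ≤ −(λ₊(ξ)+λ₋(ξ)) ≤ c₆; and (iv) for all ξ with moreover D(ξ) ≥ 1/4, c₇ ≤ λ₊(ξ) − λ₋(ξ) ≤ c₈. -/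

import Mathlib

/-!
Everything reduces to one real variable `m = mlog ξ ≥ 0`. Real roots force
`4m(1+m)² ≤ 1`, hence `m ≤ 1/4`, so `1 + m` and `1 + √D` lie in `[1, 2]`. Rationalising,
`-λ₊ = 2m(1+m)/(1+√D)` is comparable to `m`, while `-λ₋ = (1+√D)/(2(1+m))`,
`-(λ₊+λ₋) = 1/(1+m)` and `λ₊-λ₋ = √D/(1+m)` are bounded above and below.
-/

open MeasureTheory Real

noncomputable section

def mlog {n : ℕ} (ξ : EuclideanSpace ℝ (Fin n)) : ℝ := Real.log (1 + ‖ξ‖ ^ 2)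

def rho {n : ℕ} (ξ : EuclideanSpace ℝ (Fin n)) : ℝ :=
  min (min ((1/2) * mlog ξ * (1 + mlog ξ)) (1 / (2 * (1 + mlog ξ))))
    ((1/2) * Real.sqrt (mlog ξ))

def ft {n : ℕ} (f : EuclideanSpace ℝ (Fin n) → ℂ) (ξ : EuclideanSpace ℝ (Fin n)) : ℂ :=
  ∫ x, Complex.exp (-Complex.I * ((inner ℝ x ξ : ℝ) : ℂ)) * f x

def normL1 {n : ℕ} (f : EuclideanSpace ℝ (Fin n) → ℂ) : ℝ := ∫ x, ‖f x‖

def norm11 {n : ℕ} (f : EuclideanSpace ℝ (Fin n) → ℂ) : ℝ :=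
  ∫ x, (1 + ‖x‖) * ‖f x‖

def MemL11 {n : ℕ} (f : EuclideanSpace ℝ (Fin n) → ℂ) : Prop :=
  Integrable f ∧ Integrable (fun x => (1 + ‖x‖) * ‖f x‖)

def Ysq {n : ℕ} (f : EuclideanSpace ℝ (Fin n) → ℂ) (δ : ℝ) : ℝ :=
  ∫ ξ, (1 + mlog ξ) ^ δ * ‖ft f ξ‖ ^ 2

def MemY {n : ℕ} (f : EuclideanSpace ℝ (Fin n) → ℂ) (δ : ℝ) : Prop :=
  Integrable (fun ξ => (1 + mlog ξ) ^ δ * ‖ft f ξ‖ ^ 2)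

def IsFourierSol {n : ℕ} (u₀ u₁ : EuclideanSpace ℝ (Fin n) → ℂ)
    (v : ℝ → EuclideanSpace ℝ (Fin n) → ℂ) : Prop :=
  Measurable (Function.uncurry v) ∧
  ∀ ξ, ContDiff ℝ 2 (fun t => v t ξ) ∧
    (∀ t > (0:ℝ), ((1 + mlog ξ : ℝ) : ℂ) * deriv (deriv (fun s => v s ξ)) t
        + ((mlog ξ * (1 + mlog ξ) : ℝ) : ℂ) * v t ξ + deriv (fun s => v s ξ) t = 0) ∧
    v 0 ξ = ft u₀ ξ ∧ deriv (fun s => v s ξ) 0 = ft u₁ ξ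

def PP {n : ℕ} (u₀ u₁ : EuclideanSpace ℝ (Fin n) → ℂ) : ℂ := (∫ x, u₀ x) + ∫ x, u₁ x

def prof1 {n : ℕ} (u₀ u₁ : EuclideanSpace ℝ (Fin n) → ℂ) (t : ℝ)
    (ξ : EuclideanSpace ℝ (Fin n)) : ℂ :=
  PP u₀ u₁ * ((Real.exp (-(t * (mlog ξ * (1 + mlog ξ)))) : ℝ) : ℂ)

def prof2 {n : ℕ} (u₀ u₁ : EuclideanSpace ℝ (Fin n) → ℂ) (t : ℝ)
    (ξ : EuclideanSpace ℝ (Fin n)) : ℂ :=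
  ((Real.exp (-(t / (2 * mlog ξ))) : ℝ) : ℂ) *
    (((Real.sin (Real.sqrt (mlog ξ) * t) / Real.sqrt (mlog ξ) : ℝ) : ℂ) * ft u₁ ξ
      + ((Real.cos (Real.sqrt (mlog ξ) * t) : ℝ) : ℂ) * ft u₀ ξ)

def I0 {n : ℕ} (u₀ u₁ : EuclideanSpace ℝ (Fin n) → ℂ) (l : ℝ) : ℝ :=
  Real.sqrt (norm11 u₀ ^ 2 + norm11 u₁ ^ 2 + Ysq u₀ (l + 1) + Ysq u₁ l)

open Set

def charDiscr (m : ℝ) : ℝ := 1 - 4 * m * (1 + m) ^ 2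

def rootPlus (m : ℝ) : ℝ := (-1 + √(charDiscr m)) / (2 * (1 + m))

def rootMinus (m : ℝ) : ℝ := (-1 - √(charDiscr m)) / (2 * (1 + m))

section CharacteristicRoots

variable {m : ℝ}

theorem le_one_quarter_of_charDiscr_nonneg (hm : 0 ≤ m) (hD : 0 ≤ charDiscr m) : m ≤ 1 / 4 := by
  unfold charDiscr at hD
  nlinarith [mul_nonneg hm (mul_nonneg hm hm), mul_nonneg hm hm]

theorem sqrt_charDiscr_le_one (hm : 0 ≤ m) : √(charDiscr m) ≤ 1 := by
  refine Real.sqrt_le_one.mpr ?_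
  unfold charDiscr
  nlinarith [mul_nonneg hm (sq_nonneg (1 + m))]

theorem neg_rootPlus_eq (hm : 1 + m ≠ 0) (hD : 0 ≤ charDiscr m) :
    -rootPlus m = 2 * m * (1 + m) / (1 + √(charDiscr m)) := by
  have hs : 0 < 1 + √(charDiscr m) := by positivity
  have hs2 : √(charDiscr m) ^ 2 = 1 - 4 * m * (1 + m) ^ 2 := Real.sq_sqrt hD
  unfold rootPlus
  rw [← neg_div, div_eq_div_iff (mul_ne_zero two_ne_zero hm) hs.ne']
  linear_combination -hs2

theorem neg_rootMinus_eq : -rootMinus m = (1 + √(charDiscr m)) / (2 * (1 + m)) := by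
  unfold rootMinus
  ring

theorem rootPlus_add_rootMinus (hm : 1 + m ≠ 0) : rootPlus m + rootMinus m = -1 / (1 + m) := by
  unfold rootPlus rootMinus
  field_simp
  ring

theorem rootPlus_sub_rootMinus (hm : 1 + m ≠ 0) :
    rootPlus m - rootMinus m = √(charDiscr m) / (1 + m) := by
  unfold rootPlus rootMinus
  field_simp
  ring

theorem rootPlus_sub_rootMinus_mem_Icc (hm : 0 ≤ m) (hD : 1 / 4 ≤ charDiscr m) :
    rootPlus m - rootMinus m ∈ Icc (2 / 5) 1 := by
  have hm4 := le_one_quarter_of_charDiscr_nonneg hm (by linarith)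
  have hs1 := sqrt_charDiscr_le_one hm
  have hs2 : 1 / 2 ≤ √(charDiscr m) := by
    rw [Real.le_sqrt (by norm_num) (by linarith)]
    linarith
  rw [rootPlus_sub_rootMinus (by positivity), mem_Icc, le_div_iff₀ (by positivity),
    div_le_iff₀ (by positivity)]
  constructor <;> linarith

variable (hm : 0 ≤ m) (hD : 0 ≤ charDiscr m)
include hm hD

theorem neg_rootPlus_mem_Icc : -rootPlus m ∈ Icc m (5 / 2 * m) := by
  have hm4 := le_one_quarter_of_charDiscr_nonneg hm hD
  have hs1 := sqrt_charDiscr_le_one hm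
  have hs0 : 0 ≤ √(charDiscr m) := Real.sqrt_nonneg _
  rw [neg_rootPlus_eq (by positivity) hD, mem_Icc, le_div_iff₀ (by positivity),
    div_le_iff₀ (by positivity)]
  constructor <;> nlinarith [mul_nonneg hm hs0, mul_nonneg (mul_nonneg hm hm) hs0]

theorem neg_rootMinus_mem_Icc : -rootMinus m ∈ Icc (2 / 5) 1 := by
  have hm4 := le_one_quarter_of_charDiscr_nonneg hm hD
  have hs1 := sqrt_charDiscr_le_one hm
  have hs0 : 0 ≤ √(charDiscr m) := Real.sqrt_nonneg _
  rw [neg_rootMinus_eq, mem_Icc, le_div_iff₀ (by positivity), div_le_iff₀ (by positivity)]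
  constructor <;> linarith

theorem neg_rootPlus_add_rootMinus_mem_Icc : -(rootPlus m + rootMinus m) ∈ Icc (4 / 5) 1 := by
  have hm4 := le_one_quarter_of_charDiscr_nonneg hm hD
  rw [rootPlus_add_rootMinus (by positivity), neg_div, neg_neg, mem_Icc,
    le_div_iff₀ (by positivity), div_le_iff₀ (by positivity)]
  constructor <;> linarith

end CharacteristicRoots

theorem mlog_nonneg {n : ℕ} (ξ : EuclideanSpace ℝ (Fin n)) : 0 ≤ mlog ξ :=
  Real.log_nonneg (le_add_of_nonneg_right (sq_nonneg _))

theorem characteristic_roots_equivalence (n : ℕ) :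
    ∃ c₁ c₂ c₃ c₄ c₅ c₆ c₇ c₈ : ℝ,
      0 < c₁ ∧ 0 < c₂ ∧ 0 < c₃ ∧ 0 < c₄ ∧ 0 < c₅ ∧ 0 < c₆ ∧ 0 < c₇ ∧ 0 < c₈ ∧
      ∀ ξ : EuclideanSpace ℝ (Fin n),
        0 ≤ 1 - 4 * mlog ξ * (1 + mlog ξ) ^ 2 →
        (c₁ * mlog ξ ≤
            -((-1 + Real.sqrt (1 - 4 * mlog ξ * (1 + mlog ξ) ^ 2)) / (2 * (1 + mlog ξ))) ∧
          -((-1 + Real.sqrt (1 - 4 * mlog ξ * (1 + mlog ξ) ^ 2)) / (2 * (1 + mlog ξ))) ≤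
            c₂ * mlog ξ) ∧
        (c₃ ≤ -((-1 - Real.sqrt (1 - 4 * mlog ξ * (1 + mlog ξ) ^ 2)) / (2 * (1 + mlog ξ))) ∧
          -((-1 - Real.sqrt (1 - 4 * mlog ξ * (1 + mlog ξ) ^ 2)) / (2 * (1 + mlog ξ))) ≤ c₄) ∧
        (c₅ ≤ -(((-1 + Real.sqrt (1 - 4 * mlog ξ * (1 + mlog ξ) ^ 2)) / (2 * (1 + mlog ξ)))
              + ((-1 - Real.sqrt (1 - 4 * mlog ξ * (1 + mlog ξ) ^ 2)) / (2 * (1 + mlog ξ)))) ∧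
          -(((-1 + Real.sqrt (1 - 4 * mlog ξ * (1 + mlog ξ) ^ 2)) / (2 * (1 + mlog ξ)))
              + ((-1 - Real.sqrt (1 - 4 * mlog ξ * (1 + mlog ξ) ^ 2)) / (2 * (1 + mlog ξ)))) ≤ c₆) ∧
        ((1:ℝ) / 4 ≤ 1 - 4 * mlog ξ * (1 + mlog ξ) ^ 2 →
          c₇ ≤ ((-1 + Real.sqrt (1 - 4 * mlog ξ * (1 + mlog ξ) ^ 2)) / (2 * (1 + mlog ξ)))
              - ((-1 - Real.sqrt (1 - 4 * mlog ξ * (1 + mlog ξ) ^ 2)) / (2 * (1 + mlog ξ))) ∧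
            ((-1 + Real.sqrt (1 - 4 * mlog ξ * (1 + mlog ξ) ^ 2)) / (2 * (1 + mlog ξ)))
              - ((-1 - Real.sqrt (1 - 4 * mlog ξ * (1 + mlog ξ) ^ 2)) / (2 * (1 + mlog ξ))) ≤ c₈) := by
  refine ⟨1, 5 / 2, 2 / 5, 1, 4 / 5, 1, 2 / 5, 1, by norm_num, by norm_num, by norm_num,
    by norm_num, by norm_num, by norm_num, by norm_num, by norm_num, fun ξ hD => ?_⟩
  rw [one_mul]
  have hm := mlog_nonneg ξ
  exact ⟨neg_rootPlus_mem_Icc hm hD, neg_rootMinus_mem_Icc hm hD,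
    neg_rootPlus_add_rootMinus_mem_Icc hm hD, rootPlus_sub_rootMinus_mem_Icc hm⟩
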